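/- For all nonnegative integers a ≥ b, the Stirling-Carlitz number of the second kind satisfies S2_C(r^a, r^b) = (D_a/D_b) · 1 / D_{a−b}^{r^b}. -/

import Mathlib

/-! Since `r` is a power of the characteristic, `x ↦ x ^ r ^ b` is additive on `K[[z]]`, so the
coefficient of `z ^ (r ^ b * m)` in `e_C(z) ^ r ^ b` is the `r ^ b`-th power of the coefficient of
`z ^ m` in `e_C(z)`. For `m = r ^ (a - b)` this is `1 / D_{a-b} ^ r ^ b`, and `Π(r ^ j) = D_j`
turns the defining identity of `S2_C` into the formula. -/

open scoped Classical
open PowerSeries Finset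

noncomputable section

variable (F : Type) [Field F] [Fintype F]

/-- The rational function field `K = 𝔽_r(T)`. -/
abbrev K : Type := RatFunc F

/-- `r`, the cardinality of the finite field of constants. -/
def rr : ℕ := Fintype.card F

/-- The variable `T` of the rational function field. -/
def Tv : K F := RatFunc.X

/-- `[i] = T^{r^i} - T`. -/
def br (i : ℕ) : K F := Tv F ^ (rr F) ^ i - Tv F

/-- `D_0 = 1`, `D_i = [i] · D_{i-1}^r`. -/
def D : ℕ → K F
  | 0 => 1
  | i + 1 => br F (i + 1) * D i ^ rr F

/-- `L_0 = 1`, `L_i = [i] · L_{i-1}`. -/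
def L : ℕ → K F
  | 0 => 1
  | i + 1 => br F (i + 1) * L i

/-- The Carlitz factorial `Π(n) = ∏_j D_j^{c_j}`, where `c_j = n / r^j % r` are the
base-`r` digits of `n` (all digits with index `> n` vanish since `r ≥ 2`). -/
def Cf (n : ℕ) : K F := ∏ j ∈ Finset.range (n + 1), D F j ^ (n / (rr F) ^ j % rr F)

/-- The Carlitz logarithm `log_C(z) = Σ_{i ≥ 0} (-1)^i z^{r^i} / L_i`: the coefficient of
`z^m` is `(-1)^i / L_i` if `m = r^i` and `0` otherwise (note `i ≤ r^i = m` since `r ≥ 2`). -/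
def logC : PowerSeries (K F) :=
  PowerSeries.mk fun m =>
    ∑ i ∈ Finset.range (m + 1), if m = (rr F) ^ i then (-1 : K F) ^ i / L F i else 0

/-- The Carlitz exponential `e_C(z) = Σ_{i ≥ 0} z^{r^i} / D_i`. -/
def eC : PowerSeries (K F) :=
  PowerSeries.mk fun m =>
    ∑ i ∈ Finset.range (m + 1), if m = (rr F) ^ i then 1 / D F i else 0

/-- The power series `log_C(z)/z`. -/
def logCdivZ : PowerSeries (K F) :=
  PowerSeries.mk fun n => PowerSeries.coeff (n + 1) (logC F)

/-- The power series `e_C(z)/z`. -/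
def eCdivZ : PowerSeries (K F) :=
  PowerSeries.mk fun n => PowerSeries.coeff (n + 1) (eC F)

lemma Nat.pow_div_pow_mod_self {r : ℕ} (hr : 1 < r) (i j : ℕ) :
    r ^ j / r ^ i % r = if i = j then 1 else 0 := by
  rcases lt_trichotomy i j with hij | rfl | hji
  · rw [if_neg hij.ne, Nat.pow_div hij.le (by omega)]
    exact Nat.mod_eq_zero_of_dvd (dvd_pow_self r (by omega))
  · rw [if_pos rfl, Nat.div_self (by positivity), Nat.one_mod_eq_one.mpr (by omega)]
  · rw [if_neg hji.ne', Nat.div_eq_of_lt (Nat.pow_lt_pow_right hr hji), Nat.zero_mod]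

theorem PowerSeries.coeff_pow_expChar_pow {R : Type*} [CommRing R] (p : ℕ) [ExpChar R p]
    (f : R⟦X⟧) (n m : ℕ) :
    coeff (p ^ n * m) (f ^ p ^ n) = coeff m f ^ p ^ n := by
  -- Truncate, then use `f ^ p ^ n = map (iterateFrobenius) (expand (p ^ n) f)` for polynomials.
  have hq : 0 < p ^ n := pow_pos (expChar_pos R p) n
  have hN : p ^ n * m < p ^ n * m + 1 := Nat.lt_succ_self _
  have hm : m < p ^ n * m + 1 := Nat.lt_succ_of_le (Nat.le_mul_of_pos_left m hq)
  rw [← coeff_coe_trunc_of_lt hN, ← trunc_trunc_pow, coeff_coe_trunc_of_lt hN,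
    ← Polynomial.coe_pow, Polynomial.coeff_coe, ← Polynomial.map_iterateFrobenius_expand,
    Polynomial.coeff_map, Polynomial.coeff_expand hq, if_pos (dvd_mul_right _ _),
    Nat.mul_div_cancel_left m hq, iterateFrobenius_def, ← Polynomial.coeff_coe,
    coeff_coe_trunc_of_lt hm]

lemma one_lt_rr : 1 < rr F := Fintype.one_lt_card

lemma br_ne_zero {i : ℕ} (hi : i ≠ 0) : br F i ≠ 0 := by
  have h := (map_ne_zero_iff _ (IsFractionRing.injective (Polynomial F) (RatFunc F))).mpr
    (FiniteField.X_pow_card_pow_sub_X_ne_zero F hi (one_lt_rr F))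
  simpa [br, Tv] using h

lemma D_ne_zero (j : ℕ) : D F j ≠ 0 := by
  induction j with
  | zero => exact one_ne_zero
  | succ j ih => exact mul_ne_zero (br_ne_zero F j.succ_ne_zero) (pow_ne_zero _ ih)

lemma Cf_rr_pow (j : ℕ) : Cf F (rr F ^ j) = D F j := by
  simp [Cf, Nat.pow_div_pow_mod_self (one_lt_rr F),
    Nat.lt_succ_of_lt (Nat.lt_pow_self (one_lt_rr F))]

lemma coeff_eC_rr_pow (j : ℕ) : coeff (rr F ^ j) (eC F) = 1 / D F j := by
  simp [eC, Nat.pow_right_inj (one_lt_rr F), Nat.lt_succ_of_lt (Nat.lt_pow_self (one_lt_rr F))]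

lemma exists_expChar_rr_eq_pow : ∃ p n : ℕ, ExpChar (K F) p ∧ rr F = p ^ n := by
  obtain ⟨p, _⟩ := CharP.exists F
  obtain ⟨n, hp, hn⟩ := FiniteField.card F p
  have := Fact.mk hp
  exact ⟨p, n, expChar_of_injective_algebraMap (algebraMap F (K F)).injective p, hn⟩

lemma coeff_pow_rr_pow (f : PowerSeries (K F)) (k m : ℕ) :
    coeff (rr F ^ k * m) (f ^ rr F ^ k) = coeff m f ^ rr F ^ k := by
  obtain ⟨p, n, _, hr⟩ := exists_expChar_rr_eq_pow F
  rw [hr, ← pow_mul]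
  exact coeff_pow_expChar_pow p f (n * k) m

/-- For `a ≥ b`, `S2_C(r^a, r^b) = (D_a / D_b) · 1 / D_{a-b}^{r^b}`. -/
theorem stirlingCarlitzSecond_pow_pow
    (S2C : ℕ → ℕ → K F)
    (hS2C : ∀ n k : ℕ,
      PowerSeries.coeff n (eC F ^ k) / Cf F k = S2C n k / Cf F n)
    (a b : ℕ) (hab : b ≤ a) :
    S2C ((rr F) ^ a) ((rr F) ^ b) =
      D F a / D F b * (1 / D F (a - b) ^ (rr F) ^ b) := by
  obtain ⟨c, rfl⟩ := Nat.exists_eq_add_of_le hab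
  have hcoeff : coeff (rr F ^ (b + c)) (eC F ^ rr F ^ b) = (1 / D F c) ^ rr F ^ b := by
    rw [pow_add, coeff_pow_rr_pow, coeff_eC_rr_pow]
  have h := hS2C (rr F ^ (b + c)) (rr F ^ b)
  rw [hcoeff, Cf_rr_pow, Cf_rr_pow, div_eq_div_iff (D_ne_zero F b) (D_ne_zero F (b + c))] at h
  rw [eq_div_of_mul_eq (D_ne_zero F b) h.symm, Nat.add_sub_cancel_left]
  ring
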